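/- Let 0 ≤ c ≤ 1 and let z be a real number with z > c + 2. Then ∫_{c−2}^{c+2} [√(4−(s−c)²)/(2π(1+cs))] / (z − s) ds = (c + z − √((z−c)² − 4)) / (2(1+cz)). -/

import Mathlib

/-!
After the shift `s = u + c`, the partial fraction decomposition
`1 / ((1 + c (u + c)) (z - c - u)) = (c / (1 + c (u + c)) + 1 / (z - c - u)) / (1 + c z)`
splits the integral into two Cauchy transforms of the semicircle density `√(4 - u²)` on
`[-2, 2]`. Both are instances of `∫ √(4 - u²) / (a - u) du = π (a - √(a² - 4))` for `a ≥ 2`,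
obtained from an explicit arcsine primitive; since the integrand is nonnegative, the primitive
also yields its integrability at the singular point `a = 2`. The first transform is taken at
`a = c + c⁻¹` (after the reflection `u ↦ -u`), where `√(a² - 4) = c⁻¹ - c` because `c ≤ 1`,
so it equals `2 π c`.
-/

open Real Set intervalIntegral

/-- At `a = 2` the prefactor vanishes, which also hides the junk value `0 / 0` of the quotient
at `t = 2`. -/
noncomputable def stieltjesCorrection (a t : ℝ) : ℝ :=
  √(a ^ 2 - 4) * arcsin ((a * t - 4) / (2 * (a - t)))

noncomputable def stieltjesPrimitive (a t : ℝ) : ℝ :=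
  a * arcsin (t / 2) - √(4 - t ^ 2) - stieltjesCorrection a t

theorem hasDerivAt_arcsin_half {t : ℝ} (ht : t ∈ Ioo (-2 : ℝ) 2) :
    HasDerivAt (fun t => arcsin (t / 2)) (1 / √(4 - t ^ 2)) t := by
  have hlo : t / 2 ≠ -1 := by linarith [ht.1]
  have hhi : t / 2 ≠ 1 := by linarith [ht.2]
  have hsqrt : √(1 - (t / 2) ^ 2) = √(4 - t ^ 2) / 2 := by
    rw [show 1 - (t / 2) ^ 2 = (4 - t ^ 2) / 2 ^ 2 by ring, sqrt_div' _ (by positivity),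
      sqrt_sq zero_le_two]
  refine ((hasDerivAt_arcsin hlo hhi).comp t ((hasDerivAt_id t).div_const 2)).congr_deriv ?_
  rw [hsqrt]
  field_simp

theorem hasDerivAt_sqrt_four_sub_sq {t : ℝ} (ht : t ∈ Ioo (-2 : ℝ) 2) :
    HasDerivAt (fun t => √(4 - t ^ 2)) (-t / √(4 - t ^ 2)) t := by
  have hpos : 4 - t ^ 2 ≠ 0 := by nlinarith [ht.1, ht.2]
  refine (((hasDerivAt_pow 2 t).const_sub 4).sqrt hpos).congr_deriv ?_
  field_simp
  ring

theorem stieltjesCorrection_two : stieltjesCorrection 2 = 0 := by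
  funext t
  norm_num [stieltjesCorrection]

theorem hasDerivAt_stieltjesCorrection {a t : ℝ} (ha : 2 ≤ a) (ht : t ∈ Ioo (-2 : ℝ) 2) :
    HasDerivAt (stieltjesCorrection a) ((a ^ 2 - 4) / ((a - t) * √(4 - t ^ 2))) t := by
  rcases ha.eq_or_lt with rfl | ha
  · rw [stieltjesCorrection_two]
    exact (hasDerivAt_const t (0 : ℝ)).congr_deriv (by norm_num)
  obtain ⟨ht1, ht2⟩ := ht
  have hat : 0 < a - t := by linarith
  set b := √(a ^ 2 - 4)
  set w := √(4 - t ^ 2)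
  have hb2 : b ^ 2 = a ^ 2 - 4 := sq_sqrt (by nlinarith)
  have hw2 : w ^ 2 = 4 - t ^ 2 := sq_sqrt (by nlinarith)
  have hb : 0 < b := sqrt_pos.2 (by nlinarith)
  have hw : 0 < w := sqrt_pos.2 (by nlinarith)
  set u := (a * t - 4) / (2 * (a - t))
  have hu : 1 - u ^ 2 = (b * w / (2 * (a - t))) ^ 2 := by
    simp only [u]
    field_simp
    rw [hb2, hw2]
    ring
  have hsqrt : √(1 - u ^ 2) = b * w / (2 * (a - t)) := by
    rw [hu, sqrt_sq (by positivity)]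
  have hpos : 0 < 1 - u ^ 2 := by rw [hu]; positivity
  have hlo : u ≠ -1 := by intro h; rw [h] at hpos; norm_num at hpos
  have hhi : u ≠ 1 := by intro h; rw [h] at hpos; norm_num at hpos
  have hquot : HasDerivAt (fun t => (a * t - 4) / (2 * (a - t)))
      ((a * (2 * (a - t)) - (a * t - 4) * (-2)) / (2 * (a - t)) ^ 2) t := by
    refine HasDerivAt.div ?_ ?_ (by positivity)
    · simpa using ((hasDerivAt_id t).const_mul a).sub_const 4
    · simpa using ((hasDerivAt_id t).const_sub a).const_mul 2
  refine (((hasDerivAt_arcsin hlo hhi).comp t hquot).const_mul b).congr_deriv ?_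
  rw [hsqrt]
  field_simp
  ring

theorem continuousOn_stieltjesCorrection {a : ℝ} (ha : 2 ≤ a) :
    ContinuousOn (stieltjesCorrection a) (Icc (-2) 2) := by
  rcases ha.eq_or_lt with rfl | ha
  · rw [stieltjesCorrection_two]
    exact continuousOn_const
  refine continuousOn_const.mul (continuous_arcsin.comp_continuousOn ?_)
  refine ContinuousOn.div (by fun_prop) (by fun_prop) fun t ht => ?_
  linarith [ht.2]

theorem stieltjesCorrection_apply_two (a : ℝ) :
    stieltjesCorrection a 2 = √(a ^ 2 - 4) * (π / 2) := by
  rcases eq_or_ne a 2 with rfl | ha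
  · norm_num [stieltjesCorrection]
  have : (a * 2 - 4) / (2 * (a - 2)) = 1 := by
    rw [div_eq_one_iff_eq (by intro h; apply ha; linarith)]; ring
  rw [stieltjesCorrection, this, arcsin_one]

theorem stieltjesCorrection_apply_neg_two {a : ℝ} (ha : a ≠ -2) :
    stieltjesCorrection a (-2) = -(√(a ^ 2 - 4) * (π / 2)) := by
  have : (a * -2 - 4) / (2 * (a - -2)) = -1 := by
    rw [div_eq_iff (by intro h; apply ha; linarith)]; ring
  rw [stieltjesCorrection, this, arcsin_neg_one]
  ring

theorem hasDerivAt_stieltjesPrimitive {a t : ℝ} (ha : 2 ≤ a) (ht : t ∈ Ioo (-2 : ℝ) 2) :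
    HasDerivAt (stieltjesPrimitive a) (√(4 - t ^ 2) / (a - t)) t := by
  have hat : a - t ≠ 0 := by linarith [ht.2]
  have hw2 : √(4 - t ^ 2) ^ 2 = 4 - t ^ 2 := sq_sqrt (by nlinarith [ht.1, ht.2])
  have hw : √(4 - t ^ 2) ≠ 0 := by nlinarith [ht.1, ht.2]
  refine ((((hasDerivAt_arcsin_half ht).const_mul a).sub (hasDerivAt_sqrt_four_sub_sq ht)).sub
    (hasDerivAt_stieltjesCorrection ha ht)).congr_deriv ?_
  field_simp
  linear_combination -hw2

theorem continuousOn_stieltjesPrimitive {a : ℝ} (ha : 2 ≤ a) :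
    ContinuousOn (stieltjesPrimitive a) (Icc (-2) 2) :=
  ((by fun_prop : Continuous fun t : ℝ => a * arcsin (t / 2) - √(4 - t ^ 2)).continuousOn).sub
    (continuousOn_stieltjesCorrection ha)

theorem intervalIntegrable_sqrt_four_sub_sq_div_sub {a : ℝ} (ha : 2 ≤ a) :
    IntervalIntegrable (fun u => √(4 - u ^ 2) / (a - u)) MeasureTheory.volume (-2) 2 := by
  refine intervalIntegrable_deriv_of_nonneg (g := stieltjesPrimitive a) ?_ ?_ ?_
  all_goals simp only [uIcc_of_le, min_eq_left, max_eq_right, show (-2 : ℝ) ≤ 2 by norm_num]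
  · exact continuousOn_stieltjesPrimitive ha
  · exact fun t ht => hasDerivAt_stieltjesPrimitive ha ht
  · exact fun t ht => div_nonneg (sqrt_nonneg _) (by linarith [ht.2])

theorem integral_sqrt_four_sub_sq_div_sub {a : ℝ} (ha : 2 ≤ a) :
    ∫ u in (-2)..2, √(4 - u ^ 2) / (a - u) = π * (a - √(a ^ 2 - 4)) := by
  rw [integral_eq_sub_of_hasDerivAt_of_le (by norm_num) (continuousOn_stieltjesPrimitive ha)
      (fun t ht => hasDerivAt_stieltjesPrimitive ha ht)
      (intervalIntegrable_sqrt_four_sub_sq_div_sub ha),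
    stieltjesPrimitive, stieltjesPrimitive, stieltjesCorrection_apply_two,
    stieltjesCorrection_apply_neg_two (by intro h; linarith)]
  norm_num
  ring

theorem integral_sqrt_four_sub_sq_div_add (a : ℝ) :
    ∫ u in (-2)..2, √(4 - u ^ 2) / (a + u) = ∫ u in (-2)..2, √(4 - u ^ 2) / (a - u) := by
  have h := integral_comp_neg (a := -2) (b := 2) fun u => √(4 - u ^ 2) / (a - u)
  simp only [neg_neg, sub_neg_eq_add, neg_sq] at h
  exact h

theorem intervalIntegrable_sqrt_four_sub_sq_div_add {a : ℝ} (ha : 2 ≤ a) :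
    IntervalIntegrable (fun u => √(4 - u ^ 2) / (a + u)) MeasureTheory.volume (-2) 2 := by
  have h := (IntervalIntegrable.iff_comp_neg (by simp)).1
    (intervalIntegrable_sqrt_four_sub_sq_div_sub ha)
  simp only [neg_neg, sub_neg_eq_add, neg_sq] at h
  exact h.symm

theorem two_le_add_inv {c : ℝ} (hc : 0 < c) : 2 ≤ c + c⁻¹ := by
  rw [← sub_nonneg, show c + c⁻¹ - 2 = (c - 1) ^ 2 / c by field_simp; ring]
  positivity

theorem mul_div_one_add_mul_add {c : ℝ} (hc : 0 < c) (x u : ℝ) :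
    c * x / (1 + c * (u + c)) = x / (c + c⁻¹ + u) := by
  rw [show c + c⁻¹ + u = (1 + c * (u + c)) / c by field_simp; ring, div_div_eq_mul_div, mul_comm]

theorem intervalIntegrable_mul_sqrt_four_sub_sq_div {c : ℝ} (hc : 0 ≤ c) :
    IntervalIntegrable (fun u => c * √(4 - u ^ 2) / (1 + c * (u + c)))
      MeasureTheory.volume (-2) 2 := by
  rcases hc.eq_or_lt with rfl | hc
  · simp
  simp only [mul_div_one_add_mul_add hc]
  exact intervalIntegrable_sqrt_four_sub_sq_div_add (two_le_add_inv hc)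

theorem integral_mul_sqrt_four_sub_sq_div {c : ℝ} (hc0 : 0 ≤ c) (hc1 : c ≤ 1) :
    ∫ u in (-2)..2, c * √(4 - u ^ 2) / (1 + c * (u + c)) = 2 * π * c := by
  rcases hc0.eq_or_lt with rfl | hc
  · simp
  have hsqrt : √((c + c⁻¹) ^ 2 - 4) = c⁻¹ - c := by
    rw [show (c + c⁻¹) ^ 2 - 4 = (c⁻¹ - c) ^ 2 by field_simp; ring,
      sqrt_sq (by linarith [(one_le_inv₀ hc).2 hc1])]
  simp only [mul_div_one_add_mul_add hc]
  rw [integral_sqrt_four_sub_sq_div_add, integral_sqrt_four_sub_sq_div_sub (two_le_add_inv hc),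
    hsqrt]
  ring

theorem div_div_eq_inv_mul_add_div {K : Type*} [Field K] {k c d e x : K} (hk : k ≠ 0)
    (hd : d ≠ 0) (he : e ≠ 0) (h : c * e + d ≠ 0) :
    x / (k * d) / e = (k * (c * e + d))⁻¹ * (c * x / d + x / e) := by
  rw [div_add_div _ _ hd he, div_div, inv_mul_eq_div, div_div,
    div_eq_div_iff (by simp [*]) (by simp [*])]
  ring

theorem stmt_8 (c z : ℝ) (hc0 : 0 ≤ c) (hc1 : c ≤ 1) (hz : c + 2 < z) :
    (∫ s in (c - 2)..(c + 2),
        (Real.sqrt (4 - (s - c) ^ 2) / (2 * Real.pi * (1 + c * s))) / (z - s))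
    = (c + z - Real.sqrt ((z - c) ^ 2 - 4)) / (2 * (1 + c * z)) := by
  have hcz : 0 < 1 + c * z := by nlinarith
  have hpf : EqOn
      (fun u => √(4 - (u + c - c) ^ 2) / (2 * π * (1 + c * (u + c))) / (z - (u + c)))
      (fun u => (2 * π * (1 + c * z))⁻¹ *
        (c * √(4 - u ^ 2) / (1 + c * (u + c)) + √(4 - u ^ 2) / (z - c - u))) (Ioo (-2) 2) := by
    intro u hu
    have hd : 0 < 1 + c * (u + c) := by nlinarith [sq_nonneg (c + u / 2), hu.1, hu.2]
    have he : 0 < z - (u + c) := by linarith [hu.2]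
    simp only [add_sub_cancel_right, sub_add_eq_sub_sub_swap]
    rw [show 1 + c * z = c * (z - c - u) + (1 + c * (u + c)) by ring]
    exact div_div_eq_inv_mul_add_div (by positivity) hd.ne' (by linarith) (by linarith)
  rw [show c - 2 = -2 + c by ring, show c + 2 = 2 + c by ring, ← integral_comp_add_right,
    integral_congr_uIoo (by rwa [uIoo_of_le (by norm_num)]),
    integral_const_mul, integral_add (intervalIntegrable_mul_sqrt_four_sub_sq_div hc0)
      (intervalIntegrable_sqrt_four_sub_sq_div_sub (by linarith)),
    integral_mul_sqrt_four_sub_sq_div hc0 hc1, integral_sqrt_four_sub_sq_div_sub (by linarith)]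
  field_simp
  ring
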